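/- If G is a 2-edge-coloured graph whose underlying graph is a 2-tree, then χ_s(G) ≤ 5; indeed, G admits a simple homomorphism to the complete 2-edge-coloured graph on five vertices whose colour-1 edges form a 5-cycle (and whose remaining edges have colour 2). -/

import Mathlib

/-- An `(m,n)`-mixed graph on vertex type `V`: arcs (ordered pairs of distinct
vertices) coloured by `Fin m` and edges (unordered pairs of distinct vertices)
coloured by `Fin n`, with at most one adjacency between any two vertices.
`arcColor u v = some j` means there is an arc from `u` to `v` of colour `j`;
`edgeColor u v = some i` means there is an edge between `u` and `v` of colour `i`. -/
structure MixedGraph (m n : ℕ) (V : Type) where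
  arcColor : V → V → Option (Fin m)
  edgeColor : V → V → Option (Fin n)
  edge_symm : ∀ u v, edgeColor u v = edgeColor v u
  edge_irrefl : ∀ v, edgeColor v v = none
  arc_asymm : ∀ u v, (arcColor u v).isSome → arcColor v u = none
  arc_not_edge : ∀ u v, (arcColor u v).isSome → edgeColor u v = none

namespace MixedGraph

variable {m n : ℕ} {V W : Type}

/-- Adjacency in the underlying graph `U(G)`. -/
def Adj (G : MixedGraph m n V) (u v : V) : Prop :=
  (G.arcColor u v).isSome ∨ (G.arcColor v u).isSome ∨ (G.edgeColor u v).isSome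

/-- The underlying simple graph `U(G)`. -/
def underlying (G : MixedGraph m n V) : SimpleGraph V where
  Adj := G.Adj
  symm := by
    constructor
    intro u v h
    rcases h with h | h | h
    · exact Or.inr (Or.inl h)
    · exact Or.inl h
    · refine Or.inr (Or.inr ?_)
      rw [G.edge_symm]
      exact h
  loopless := by
    constructor
    intro v h
    rcases h with h | h | h
    · simp [G.arc_asymm v v h] at h
    · simp [G.arc_asymm v v h] at h
    · simp [G.edge_irrefl v] at h

/-- `G` is complete when its underlying graph is a complete graph. -/
def IsComplete (G : MixedGraph m n V) : Prop :=
  ∀ u v : V, u ≠ v → G.Adj u v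

/-- A simple homomorphism of `(m,n)`-mixed graphs: either `G` has one vertex or
`φ` is non-constant, and every arc/edge is mapped to an arc/edge of the same
colour unless its endpoints are identified. -/
def IsSimpleHom [Fintype V] (G : MixedGraph m n V) (H : MixedGraph m n W) (φ : V → W) : Prop :=
  (Fintype.card V = 1 ∨ ∃ x y : V, φ x ≠ φ y) ∧
  (∀ u v : V, ∀ j : Fin m, G.arcColor u v = some j →
      φ u = φ v ∨ H.arcColor (φ u) (φ v) = some j) ∧
  (∀ u v : V, ∀ i : Fin n, G.edgeColor u v = some i →
      φ u = φ v ∨ H.edgeColor (φ u) (φ v) = some i)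

/-- The simple chromatic number `χₛ(G)`: the least `t` such that `G` admits a
simple homomorphism to some `(m,n)`-mixed graph on `t` vertices. -/
noncomputable def simpleChrom [Fintype V] (G : MixedGraph m n V) : ℕ :=
  sInf {t : ℕ | ∃ H : MixedGraph m n (Fin t), ∃ φ : V → Fin t, G.IsSimpleHom H φ}

/-- An (ordinary) homomorphism of `(m,n)`-mixed graphs. -/
def IsHom (G : MixedGraph m n V) (H : MixedGraph m n W) (φ : V → W) : Prop :=
  (∀ u v : V, G.Adj u v → φ u ≠ φ v) ∧
  (∀ u v : V, ∀ j : Fin m, G.arcColor u v = some j → H.arcColor (φ u) (φ v) = some j) ∧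
  (∀ u v : V, ∀ i : Fin n, G.edgeColor u v = some i → H.edgeColor (φ u) (φ v) = some i)

/-- The chromatic number `χ(G)`: the least `t` such that `G` admits a
homomorphism to some `(m,n)`-mixed graph on `t` vertices. -/
noncomputable def chrom (G : MixedGraph m n V) : ℕ :=
  sInf {t : ℕ | ∃ H : MixedGraph m n (Fin t), ∃ φ : V → Fin t, G.IsHom H φ}

/-- `v` is between `u` and `w`: both `u` and `w` are adjacent to `v`, and `u`
and `w` do not agree on `v` (the two adjacencies do not have the same type). -/
def Between (G : MixedGraph m n V) (v u w : V) : Prop :=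
  G.Adj u v ∧ G.Adj w v ∧
  ¬ ((∃ i : Fin n, G.edgeColor u v = some i ∧ G.edgeColor w v = some i) ∨
     (∃ j : Fin m, G.arcColor u v = some j ∧ G.arcColor w v = some j) ∨
     (∃ j : Fin m, G.arcColor v u = some j ∧ G.arcColor v w = some j))

/-- A set of vertices is convex if no vertex outside it is between two of its
vertices. -/
def IsConvex (G : MixedGraph m n V) (C : Set V) : Prop :=
  ∀ u ∈ C, ∀ w ∈ C, ∀ v : V, G.Between v u w → v ∈ C

/-- `conv(N)`: the smallest convex set containing `N`. -/
def conv (G : MixedGraph m n V) (N : Set V) : Set V :=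
  ⋂₀ {C : Set V | G.IsConvex C ∧ N ⊆ C}

end MixedGraph

/-- `G` is a `k`-tree: it can be built from `K_{k+1}` by repeatedly adding a
new vertex joined to exactly the vertices of an existing `k`-clique; encoded by
a construction ordering of the vertices. -/
def IsKTree (k : ℕ) {V : Type} [Fintype V] (G : SimpleGraph V) : Prop :=
  k + 1 ≤ Fintype.card V ∧
  ∃ e : Fin (Fintype.card V) ≃ V,
    (∀ i j : Fin (Fintype.card V), (i : ℕ) < k + 1 → (j : ℕ) < k + 1 → i ≠ j →
        G.Adj (e i) (e j)) ∧
    (∀ j : Fin (Fintype.card V), k + 1 ≤ (j : ℕ) →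
      ∃ S : Finset (Fin (Fintype.card V)), S.card = k ∧ (∀ a ∈ S, a < j) ∧
        (∀ a ∈ S, ∀ b ∈ S, a ≠ b → G.Adj (e a) (e b)) ∧
        (∀ i : Fin (Fintype.card V), i < j → (G.Adj (e i) (e j) ↔ i ∈ S)))

/-- The edge-colouring of the target graph: colour-0 edges form a 5-cycle. -/
private def Hedge5 (u v : Fin 5) : Option (Fin 2) :=
  if u = v then none
  else if ((u : ℕ) + 1) % 5 = (v : ℕ) ∨ ((v : ℕ) + 1) % 5 = (u : ℕ) then some 0 else some 1

private lemma Hedge5_symm : ∀ u v : Fin 5, Hedge5 u v = Hedge5 v u := by decide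

private lemma hkey0 : ∀ (p : Fin 5) (c : Fin 2), ∃ w : Fin 5, w ≠ p ∧ Hedge5 w p = some c := by
  decide

private lemma hkey : ∀ (p q : Fin 5) (c1 c2 : Fin 2), ∃ w : Fin 5,
    (w = p ∨ Hedge5 w p = some c1) ∧ (w = q ∨ Hedge5 w q = some c2) := by decide

private lemma hflip (p w : Fin 5) (c : Fin 2) (h : w = p ∨ Hedge5 w p = some c) :
    p = w ∨ Hedge5 p w = some c :=
  h.imp Eq.symm (fun h => (Hedge5_symm p w).trans h)

/-- If `G` is a 2-edge-coloured graph (a `(0,2)`-mixed graph)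
whose underlying graph is a 2-tree, then `χₛ(G) ≤ 5`; indeed `G` admits a
simple homomorphism to the complete 2-edge-coloured graph on five vertices
whose colour-1 edges (here colour `0 : Fin 2`) form a 5-cycle and whose
remaining edges have colour 2 (here `1 : Fin 2`). -/
theorem stmt19 {V : Type} [Fintype V] (G : MixedGraph 0 2 V)
    (h2tree : IsKTree 2 G.underlying)
    (H : MixedGraph 0 2 (Fin 5))
    (hH : ∀ u v : Fin 5, H.edgeColor u v =
      if u = v then none
      else if ((u : ℕ) + 1) % 5 = (v : ℕ) ∨ ((v : ℕ) + 1) % 5 = (u : ℕ)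
        then some 0 else some 1) :
    G.simpleChrom ≤ 5 ∧ ∃ φ : V → Fin 5, G.IsSimpleHom H φ := by
  have hH' : ∀ u v : Fin 5, H.edgeColor u v = Hedge5 u v := fun u v => by
    rw [hH]; rfl
  obtain ⟨hcard, e, hbase, hstep⟩ := h2tree
  have h3 : 3 ≤ Fintype.card V := hcard
  have noarc : ∀ u v : V, G.arcColor u v = none := fun u v => by
    cases h : G.arcColor u v with
    | none => rfl
    | some j => exact j.elim0
  have adj_edge : ∀ u v : V, G.Adj u v → ∃ c, G.edgeColor u v = some c := by
    intro u v h
    rcases h with h | h | h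
    · rw [noarc] at h; exact absurd h (by simp)
    · rw [noarc] at h; exact absurd h (by simp)
    · exact Option.isSome_iff_exists.mp h
  have claim : ∀ t, t ≤ Fintype.card V → ∃ ψ : Fin (Fintype.card V) → Fin 5,
      (2 ≤ t → ψ ⟨0, by omega⟩ ≠ ψ ⟨1, by omega⟩) ∧
      ∀ i j : Fin (Fintype.card V), (i : ℕ) < t → (j : ℕ) < t → ∀ c : Fin 2,
        G.edgeColor (e i) (e j) = some c → ψ i = ψ j ∨ Hedge5 (ψ i) (ψ j) = some c := by
    intro t
    induction t with
    | zero =>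
      intro _
      exact ⟨fun _ => 0, by omega, fun i j hi hj => by omega⟩
    | succ t ih =>
      intro ht
      obtain ⟨ψ, hnc, hgood⟩ := ih (by omega)
      have htN : t < Fintype.card V := ht
      obtain ⟨jI, hjIval⟩ : ∃ jI : Fin (Fintype.card V), (jI : ℕ) = t := ⟨⟨t, htN⟩, rfl⟩
      have hmain : ∃ w : Fin 5, (t = 1 → w ≠ ψ ⟨0, by omega⟩) ∧
          ∀ i : Fin (Fintype.card V), (i : ℕ) < t → ∀ c : Fin 2,
            G.edgeColor (e i) (e jI) = some c → ψ i = w ∨ Hedge5 (ψ i) w = some c := by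
        rcases Nat.lt_or_ge t 3 with hlt3 | hge3
        · interval_cases t
          · -- t = 0
            exact ⟨0, fun h => absurd h (by decide), fun i hi => absurd hi (by omega)⟩
          · -- t = 1
            have hadj : G.Adj (e ⟨0, by omega⟩) (e jI) :=
              hbase ⟨0, by omega⟩ jI (show (0 : ℕ) < 2 + 1 by omega)
                (show (jI : ℕ) < 2 + 1 by omega)
                (Fin.ne_of_val_ne (show (0 : ℕ) ≠ (jI : ℕ) by omega))
            obtain ⟨c0, hc0⟩ := adj_edge _ _ hadj
            obtain ⟨w, hwne, hwc⟩ := hkey0 (ψ ⟨0, by omega⟩) c0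
            refine ⟨w, fun _ => hwne, ?_⟩
            intro i hi c hc
            have hieq : i = ⟨0, by omega⟩ := Fin.ext (show (i : ℕ) = 0 by omega)
            rw [hieq] at hc ⊢
            rw [hc0] at hc
            have hcc : c0 = c := Option.some_injective _ hc
            right
            rw [← hcc]
            exact (Hedge5_symm _ _).trans hwc
          · -- t = 2
            have hadj0 : G.Adj (e ⟨0, by omega⟩) (e jI) :=
              hbase ⟨0, by omega⟩ jI (show (0 : ℕ) < 2 + 1 by omega)
                (show (jI : ℕ) < 2 + 1 by omega)
                (Fin.ne_of_val_ne (show (0 : ℕ) ≠ (jI : ℕ) by omega))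
            have hadj1 : G.Adj (e ⟨1, by omega⟩) (e jI) :=
              hbase ⟨1, by omega⟩ jI (show (1 : ℕ) < 2 + 1 by omega)
                (show (jI : ℕ) < 2 + 1 by omega)
                (Fin.ne_of_val_ne (show (1 : ℕ) ≠ (jI : ℕ) by omega))
            obtain ⟨c0, hc0⟩ := adj_edge _ _ hadj0
            obtain ⟨c1, hc1⟩ := adj_edge _ _ hadj1
            obtain ⟨w, hw0, hw1⟩ := hkey (ψ ⟨0, by omega⟩) (ψ ⟨1, by omega⟩) c0 c1
            refine ⟨w, fun h => absurd h (by decide), ?_⟩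
            intro i hi c hc
            rcases (by omega : (i : ℕ) = 0 ∨ (i : ℕ) = 1) with h0 | h1
            · have hieq : i = ⟨0, by omega⟩ := Fin.ext (show (i : ℕ) = 0 by omega)
              rw [hieq] at hc ⊢
              rw [hc0] at hc
              have hcc : c0 = c := Option.some_injective _ hc
              rw [← hcc]
              exact hflip _ _ _ hw0
            · have hieq : i = ⟨1, by omega⟩ := Fin.ext (show (i : ℕ) = 1 by omega)
              rw [hieq] at hc ⊢
              rw [hc1] at hc
              have hcc : c1 = c := Option.some_injective _ hc
              rw [← hcc]
              exact hflip _ _ _ hw1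
        · -- t ≥ 3
          obtain ⟨S, hS2, hSlt, _, hSiff⟩ := hstep jI (by omega)
          obtain ⟨a, b, hab, hSab⟩ := Finset.card_eq_two.mp hS2
          have haS : a ∈ S := by rw [hSab]; simp
          have hbS : b ∈ S := by rw [hSab]; simp
          have haj : G.Adj (e a) (e jI) := (hSiff a (hSlt a haS)).mpr haS
          have hbj : G.Adj (e b) (e jI) := (hSiff b (hSlt b hbS)).mpr hbS
          obtain ⟨ca, hca⟩ := adj_edge _ _ haj
          obtain ⟨cb, hcb⟩ := adj_edge _ _ hbj
          obtain ⟨w, hwa, hwb⟩ := hkey (ψ a) (ψ b) ca cb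
          refine ⟨w, fun h => absurd h (by omega), ?_⟩
          intro i hi c hc
          have hadj : G.Adj (e i) (e jI) := Or.inr (Or.inr (by rw [hc]; rfl))
          have hilt : i < jI := by rw [Fin.lt_def]; omega
          have hmem := (hSiff i hilt).mp hadj
          rw [hSab] at hmem
          rcases Finset.mem_insert.mp hmem with h | h
          · rw [h] at hc ⊢
            rw [hca] at hc
            have hcc : ca = c := Option.some_injective _ hc
            rw [← hcc]
            exact hflip _ _ _ hwa
          · have h' : i = b := Finset.mem_singleton.mp h
            rw [h'] at hc ⊢
            rw [hcb] at hc
            have hcc : cb = c := Option.some_injective _ hc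
            rw [← hcc]
            exact hflip _ _ _ hwb
      obtain ⟨w, hwne, hw⟩ := hmain
      refine ⟨Function.update ψ jI w, ?_, ?_⟩
      · intro h2
        have hne0 : (⟨0, by omega⟩ : Fin (Fintype.card V)) ≠ jI :=
          Fin.ne_of_val_ne (show (0 : ℕ) ≠ (jI : ℕ) by omega)
        rcases Nat.lt_or_ge t 2 with h2' | h2'
        · -- t = 1
          have ht1 : t = 1 := by omega
          have hne1 : (⟨1, by omega⟩ : Fin (Fintype.card V)) = jI :=
            Fin.ext (show (1 : ℕ) = (jI : ℕ) by omega)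
          rw [Function.update_of_ne hne0, hne1, Function.update_self]
          exact (hwne ht1).symm
        · have hne1 : (⟨1, by omega⟩ : Fin (Fintype.card V)) ≠ jI :=
            Fin.ne_of_val_ne (show (1 : ℕ) ≠ (jI : ℕ) by omega)
          rw [Function.update_of_ne hne0, Function.update_of_ne hne1]
          exact hnc h2'
      · intro i j hi hj c hc
        have hi' : (i : ℕ) < t ∨ i = jI := by
          rcases Nat.lt_or_ge (i : ℕ) t with h | h
          · exact Or.inl h
          · exact Or.inr (Fin.ext (show (i : ℕ) = (jI : ℕ) by omega))
        have hj' : (j : ℕ) < t ∨ j = jI := by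
          rcases Nat.lt_or_ge (j : ℕ) t with h | h
          · exact Or.inl h
          · exact Or.inr (Fin.ext (show (j : ℕ) = (jI : ℕ) by omega))
        rcases hi' with hi' | hi' <;> rcases hj' with hj' | hj'
        · have hnei : i ≠ jI := Fin.ne_of_val_ne (show (i : ℕ) ≠ (jI : ℕ) by omega)
          have hnej : j ≠ jI := Fin.ne_of_val_ne (show (j : ℕ) ≠ (jI : ℕ) by omega)
          rw [Function.update_of_ne hnei, Function.update_of_ne hnej]
          exact hgood i j hi' hj' c hc
        · have hnei : i ≠ jI := Fin.ne_of_val_ne (show (i : ℕ) ≠ (jI : ℕ) by omega)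
          rw [hj'] at hc ⊢
          rw [Function.update_of_ne hnei, Function.update_self]
          exact hw i hi' c hc
        · have hnej : j ≠ jI := Fin.ne_of_val_ne (show (j : ℕ) ≠ (jI : ℕ) by omega)
          rw [hi'] at hc ⊢
          rw [G.edge_symm] at hc
          rw [Function.update_self, Function.update_of_ne hnej]
          exact hflip _ _ _ (hw j hj' c hc)
        · rw [hi', hj'] at hc
          rw [G.edge_irrefl] at hc
          simp at hc
  obtain ⟨ψ, hnc, hgood⟩ := claim (Fintype.card V) le_rfl
  set φ : V → Fin 5 := fun v => ψ (e.symm v) with hφ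
  have hhom : G.IsSimpleHom H φ := by
    refine ⟨Or.inr ⟨e ⟨0, by omega⟩, e ⟨1, by omega⟩, ?_⟩, fun u v j _ => j.elim0, ?_⟩
    · simpa [hφ] using hnc (by omega)
    · intro u v c hc
      have h1 := hgood (e.symm u) (e.symm v) (e.symm u).isLt (e.symm v).isLt c (by simpa using hc)
      rcases h1 with h | h
      · exact Or.inl h
      · right
        rw [hH']
        exact h
  exact ⟨Nat.sInf_le ⟨H, φ, hhom⟩, φ, hhom⟩
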